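/- Let α > 0 and let {ε_k}_{k∈ℕ} be nonnegative reals with ∑_{k=0}^∞ ε_k² < +∞. Let {x^k} ⊆ ℝ^n satisfy (H1°): F(x^{k+1}) − F(x^k) ≤ −α‖x^{k+1} − x^k‖² + ε_k² for each k. Suppose some limiting point x* of {x^k} (i.e. the limit of some subsequence) is a local minimum of F. Then the whole sequence {x^k} converges to x*. -/

import Mathlib

/-!
Sufficient decrease with square-summable errors makes `F (x k)` converge, necessarily to
`F x*`, and forces the steps `‖x (k + 1) - x k‖` to zero. Such a sequence, coming arbitrarily
close to a strict local minimum `x*`, cannot leave a small ball around it again: to escape it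
would have to step into an annulus on which `F` stays a fixed amount above `F x*`.

It remains to see that local minima of the `ℓ_p` objective are isolated. At a local minimum `w`
the first-order condition gives `λ p |w i| ^ (p - 1) ≤ 2 ‖A‖ ‖A w - b‖` for `w i ≠ 0`, so near
a local minimum `z` every local minimum `y` vanishes exactly where `z` does, and no coordinate
changes sign on the line through `z` and `y` for `t ∈ [-1, 1]`. There `F (z + t (y - z))` is
`‖u + t v‖² + λ ∑ (c i + t e i) ^ p`, whose second derivative `2 ‖v‖² + λ p (p - 1) ∑ ...` is
strictly concave. Nonnegative at the local minima `t = 0` and `t = 1`, it is then positive in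
between, so the derivative, which vanishes at both ends, would be strictly increasing on `[0, 1]`.
-/

open Filter Topology Set

theorem IsLocalMin.nonneg_of_hasDerivAt_of_hasDerivAt {f f' : ℝ → ℝ} {a f'' : ℝ}
    (h : IsLocalMin f a) (hf : ∀ᶠ t in 𝓝 a, HasDerivAt f (f' t) t)
    (hf' : HasDerivAt f' f'' a) : 0 ≤ f'' := by
  by_contra! hneg
  have hderiv : deriv f =ᶠ[𝓝 a] f' := hf.mono fun t ht => ht.deriv
  -- The second-derivative test makes `a` a local maximum too, so `f` is locally constant.
  have hmax : IsLocalMax f a :=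
    isLocalMax_of_deriv_deriv_neg (by rwa [hderiv.deriv_eq, hf'.deriv])
      (by rw [hderiv.eq_of_nhds, h.hasDerivAt_eq_zero hf.self_of_nhds])
      hf.self_of_nhds.continuousAt
  have hconst : ∀ᶠ t in 𝓝 a, f t = f a := (h.and hmax).mono fun t ht => le_antisymm ht.2 ht.1
  have hzero : f' =ᶠ[𝓝 a] fun _ => 0 :=
    (hconst.eventually_nhds.and hf).mono fun t ht =>
      ht.2.unique ((hasDerivAt_const t (f a)).congr_of_eventuallyEq ht.1)
  exact hneg.ne ((hf'.congr_of_eventuallyEq hzero.symm).unique (hasDerivAt_const a 0))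

theorem IsLocalMin.not_isLocalMin_of_strictConcaveOn_deriv2 {f f' f'' : ℝ → ℝ} {a b : ℝ}
    (hab : a < b) (hf : ∀ t ∈ Icc a b, ∀ᶠ s in 𝓝 t, HasDerivAt f (f' s) s)
    (hf' : ∀ t ∈ Icc a b, HasDerivAt f' (f'' t) t) (hconc : StrictConcaveOn ℝ (Icc a b) f'')
    (ha : IsLocalMin f a) : ¬ IsLocalMin f b := by
  intro hb
  have ha' : a ∈ Icc a b := left_mem_Icc.2 hab.le
  have hb' : b ∈ Icc a b := right_mem_Icc.2 hab.le
  have hpos : ∀ t ∈ Ioo a b, 0 < f'' t := fun t ht =>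
    (le_min (ha.nonneg_of_hasDerivAt_of_hasDerivAt (hf a ha') (hf' a ha'))
      (hb.nonneg_of_hasDerivAt_of_hasDerivAt (hf b hb') (hf' b hb'))).trans_lt
      (hconc.lt_on_openSegment ha' hb' hab.ne (by rwa [openSegment_eq_Ioo hab]))
  have hmono : StrictMonoOn f' (Icc a b) :=
    strictMonoOn_of_deriv_pos (convex_Icc a b)
      (fun t ht => (hf' t ht).continuousAt.continuousWithinAt) fun t ht => by
        rw [interior_Icc] at ht
        rw [(hf' t (Ioo_subset_Icc_self ht)).deriv]
        exact hpos t ht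
  have h := hmono ha' hb' hab
  rw [ha.hasDerivAt_eq_zero (hf a ha').self_of_nhds,
    hb.hasDerivAt_eq_zero (hf b hb').self_of_nhds] at h
  exact h.false

theorem strictConvexOn_rpow_of_neg {r : ℝ} (hr : r < 0) :
    StrictConvexOn ℝ (Ioi 0) fun x : ℝ => x ^ r := by
  refine StrictMonoOn.strictConvexOn_of_deriv (convex_Ioi 0)
    (fun x hx => (Real.continuousAt_rpow_const x r (Or.inl (ne_of_gt hx))).continuousWithinAt) ?_
  rw [interior_Ioi]
  intro x hx y hy hxy
  simp only [Real.deriv_rpow_const]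
  exact mul_lt_mul_of_neg_left (Real.rpow_lt_rpow_of_neg hx hxy (by linarith)) hr

theorem StrictConvexOn.strictConcaveOn_const_add_mul {E : Type*} [AddCommMonoid E] [Module ℝ E]
    {s : Set E} {f : E → ℝ} (hf : StrictConvexOn ℝ s f) (a : ℝ) {κ : ℝ} (hκ : κ < 0) :
    StrictConcaveOn ℝ s fun x => a + κ * f x := by
  refine ⟨hf.1, fun x hx y hy hxy u v hu hv huv => ?_⟩
  have := hf.2 hx hy hxy hu hv huv
  have hsplit : u * a + v * a = a := by rw [← add_mul, huv, one_mul]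
  simp only [smul_eq_mul] at this ⊢
  nlinarith [mul_lt_mul_of_neg_left this hκ]

theorem strictConvexOn_sum_sq_mul_rpow {ι : Type*} [Fintype ι] {S : Set ℝ} (hS : Convex ℝ S)
    {r : ℝ} (hr : r < 0) {c e : ι → ℝ} (he : ∃ i, e i ≠ 0)
    (hpos : ∀ t ∈ S, ∀ i, e i ≠ 0 → 0 < c i + t * e i) :
    StrictConvexOn ℝ S fun t => ∑ i, e i ^ 2 * (c i + t * e i) ^ r := by
  refine ⟨hS, fun x hx y hy hxy a b ha hb hab => ?_⟩
  have hterm : ∀ i, e i ≠ 0 → e i ^ 2 * (c i + (a * x + b * y) * e i) ^ r <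
      a * (e i ^ 2 * (c i + x * e i) ^ r) + b * (e i ^ 2 * (c i + y * e i) ^ r) := by
    intro i hi
    have hmid : c i + (a * x + b * y) * e i = a * (c i + x * e i) + b * (c i + y * e i) := by
      linear_combination (-c i) * hab
    have hne : c i + x * e i ≠ c i + y * e i := fun h =>
      hxy (mul_right_cancel₀ hi (add_left_cancel h))
    have := (strictConvexOn_rpow_of_neg hr).2 (hpos x hx i hi) (hpos y hy i hi) hne ha hb hab
    simp only [smul_eq_mul] at this
    rw [hmid]
    nlinarith [pow_pos (abs_pos.2 hi) 2, sq_abs (e i)]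
  simp only [smul_eq_mul, Finset.mul_sum, ← Finset.sum_add_distrib]
  obtain ⟨j, hj⟩ := he
  refine Finset.sum_lt_sum (fun i _ => ?_) ⟨j, Finset.mem_univ j, hterm j hj⟩
  by_cases hi : e i = 0
  · simp [hi]
  · exact (hterm i hi).le

theorem hasDerivAt_add_mul_rpow {c e q t : ℝ} (h : e ≠ 0 → 0 < c + t * e) :
    HasDerivAt (fun s => (c + s * e) ^ q) (q * e * (c + t * e) ^ (q - 1)) t := by
  rcases eq_or_ne e 0 with rfl | he
  · simpa using hasDerivAt_const t (c ^ q)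
  · convert ((hasDerivAt_mul_const e).const_add c).rpow_const (p := q)
      (Or.inl (h he).ne') using 1
    ring

theorem exists_tendsto_of_sufficient_decrease {f s e : ℕ → ℝ} {α : ℝ} (hα : 0 < α)
    (hf : BddBelow (range f)) (hs : ∀ k, 0 ≤ s k) (he : ∀ k, 0 ≤ e k) (hsum : Summable e)
    (hdec : ∀ k, f (k + 1) - f k ≤ -α * s k + e k) :
    (∃ L, Tendsto f atTop (𝓝 L)) ∧ Tendsto s atTop (𝓝 0) := by
  set u : ℕ → ℝ := fun k => f k - ∑ j ∈ Finset.range k, e j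
  have hstep : ∀ k, α * s k ≤ u k - u (k + 1) := fun k => by
    simp only [u, Finset.sum_range_succ]
    linarith [hdec k]
  have hanti : Antitone u := antitone_nat_of_succ_le fun k => by
    nlinarith [hstep k, hs k]
  obtain ⟨m, hm⟩ := hf
  have hbdd : BddBelow (range u) := by
    refine ⟨m - ∑' j, e j, ?_⟩
    rintro _ ⟨k, rfl⟩
    have := hsum.sum_le_tsum (Finset.range k) fun j _ => he j
    linarith [hm ⟨k, rfl⟩]
  have hu := tendsto_atTop_ciInf hanti hbdd
  refine ⟨⟨_, (hu.add hsum.hasSum.tendsto_sum_nat).congr fun k => by simp [u]⟩, ?_⟩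
  have hdiff : Tendsto (fun k => (u k - u (k + 1)) / α) atTop (𝓝 0) := by
    simpa using (hu.sub (hu.comp (tendsto_add_atTop_nat 1))).div_const α
  exact squeeze_zero hs (fun k => by rw [le_div_iff₀ hα]; linarith [hstep k]) hdiff

theorem IsLocalMin.eventually_lt_of_isolated {X : Type*} [TopologicalSpace X] {F : X → ℝ}
    {a : X} (h : IsLocalMin F a) (hiso : ∀ᶠ x in 𝓝 a, IsLocalMin F x → x = a) :
    ∀ᶠ x in 𝓝[≠] a, F a < F x := by
  filter_upwards [nhdsWithin_le_nhds h.eventually_nhds, nhdsWithin_le_nhds hiso,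
    self_mem_nhdsWithin] with x hx hxiso hxa
  refine lt_of_le_of_ne hx.self_of_nhds fun heq => hxa (hxiso ?_)
  exact hx.mono fun y hy => heq ▸ hy

theorem tendsto_of_mapClusterPt_of_eventually_lt {X : Type*} [MetricSpace X] [ProperSpace X]
    {F : X → ℝ} {x : ℕ → X} {a : X} (hF : Continuous F) (hmin : ∀ᶠ v in 𝓝[≠] a, F a < F v)
    (hclus : MapClusterPt a atTop x)
    (hstep : Tendsto (fun k => dist (x (k + 1)) (x k)) atTop (𝓝 0))
    (hval : Tendsto (fun k => F (x k)) atTop (𝓝 (F a))) : Tendsto x atTop (𝓝 a) := by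
  rw [Metric.tendsto_atTop]
  intro ε hε
  obtain ⟨r, hr, hball⟩ := Metric.mem_nhdsWithin_iff.1 hmin
  set ρ := min ε r / 2 with hρ
  have hρpos : 0 < ρ := by positivity
  -- `F` exceeds `F a` by some `δ` on the annulus `ρ / 2 ≤ dist v a ≤ ρ`, which the sequence
  -- would have to enter in order to leave the ball of radius `ρ / 2`.
  obtain ⟨δ, hδ, hannulus⟩ := ((isCompact_closedBall a ρ).diff Metric.isOpen_ball).exists_forall_le'
    hF.continuousOn (a := F a) fun v hv => by
      have hva : ρ / 2 ≤ dist v a := not_lt.1 hv.2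
      refine hball ⟨?_, ?_⟩
      · exact Metric.mem_ball.2 ((Metric.mem_closedBall.1 hv.1).trans_lt (by
          rw [hρ]; linarith [min_le_right ε r]))
      · rintro rfl
        rw [dist_self] at hva
        linarith
  obtain ⟨N₀, hN₀⟩ := eventually_atTop.1
    ((hval.eventually (gt_mem_nhds hδ)).and (hstep.eventually (gt_mem_nhds (half_pos hρpos))))
  obtain ⟨N, hN, hxN⟩ := frequently_atTop.1
    (hclus.frequently (Metric.ball_mem_nhds a (half_pos hρpos))) N₀
  have hstay : ∀ k ≥ N, dist (x k) a < ρ / 2 := by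
    refine Nat.le_induction hxN fun k hk ih => ?_
    have hdk := (hN₀ k (by omega)).2
    by_contra! hfar
    have hnear : dist (x (k + 1)) a ≤ ρ := by
      linarith [dist_triangle (x (k + 1)) (x k) a]
    have := hannulus (x (k + 1))
      ⟨Metric.mem_closedBall.2 hnear, fun h => absurd (Metric.mem_ball.1 h) (not_lt.2 hfar)⟩
    linarith [(hN₀ (k + 1) (by omega)).1]
  refine ⟨N, fun k hk => (hstay k hk).trans_le ?_⟩
  rw [hρ]
  linarith [min_le_left ε r]

section LineObjective

variable {H : Type*} [NormedAddCommGroup H] [InnerProductSpace ℝ H] {ι : Type*} [Fintype ι]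

/-- The `ℓ_p` objective along a line `t ↦ z + t • d` on which no coordinate changes sign, with
`u = A z - b`, `v = A d`, `c i = |z i|` and `e i = sign (z i) * d i`. -/
noncomputable def lineObjective (u v : H) (lam p : ℝ) (c e : ι → ℝ) (t : ℝ) : ℝ :=
  ‖u + t • v‖ ^ 2 + lam * ∑ i, (c i + t * e i) ^ p

noncomputable def lineObjectiveDeriv (u v : H) (lam p : ℝ) (c e : ι → ℝ) (t : ℝ) : ℝ :=
  2 * (inner ℝ u v + t * ‖v‖ ^ 2) + lam * ∑ i, p * e i * (c i + t * e i) ^ (p - 1)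

theorem hasDerivAt_lineObjective {u v : H} {lam p t : ℝ} {c e : ι → ℝ}
    (h : ∀ i, e i ≠ 0 → 0 < c i + t * e i) :
    HasDerivAt (lineObjective u v lam p c e) (lineObjectiveDeriv u v lam p c e t) t := by
  have hquad := ((hasDerivAt_id t).smul_const v).const_add u |>.norm_sq
  have hsum := HasDerivAt.fun_sum (u := Finset.univ) fun i _ =>
    hasDerivAt_add_mul_rpow (c := c i) (e := e i) (q := p) (h i)
  refine (hquad.add (hsum.const_mul lam)).congr_deriv ?_
  simp only [lineObjectiveDeriv, id, one_smul, inner_add_left, real_inner_smul_left,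
    real_inner_self_eq_norm_sq]

theorem hasDerivAt_lineObjectiveDeriv {u v : H} {lam p t : ℝ} {c e : ι → ℝ}
    (h : ∀ i, e i ≠ 0 → 0 < c i + t * e i) :
    HasDerivAt (lineObjectiveDeriv u v lam p c e)
      (2 * ‖v‖ ^ 2 + lam * (p * (p - 1)) * ∑ i, e i ^ 2 * (c i + t * e i) ^ (p - 2)) t := by
  have hlin : HasDerivAt (fun s : ℝ => 2 * (inner ℝ u v + s * ‖v‖ ^ 2)) (2 * ‖v‖ ^ 2) t := by
    simpa using ((hasDerivAt_mul_const (‖v‖ ^ 2)).const_add (inner ℝ u v)).const_mul 2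
  have hsum := HasDerivAt.fun_sum (u := Finset.univ) fun i _ =>
    (hasDerivAt_add_mul_rpow (c := c i) (e := e i) (q := p - 1) (h i)).const_mul (p * e i)
  refine (hlin.add (hsum.const_mul lam)).congr_deriv ?_
  rw [Finset.mul_sum, Finset.mul_sum]
  congr 1
  refine Finset.sum_congr rfl fun i _ => ?_
  rw [show p - 1 - 1 = p - 2 by ring]
  ring

theorem not_isLocalMin_lineObjective_one {u v : H} {lam p : ℝ} {c e : ι → ℝ} (hp0 : 0 < p)
    (hp1 : p < 1) (hlam : 0 < lam) (he : ∃ i, e i ≠ 0) (hc : ∀ i, e i ≠ 0 → 0 < c i)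
    (hce : ∀ i, e i ≠ 0 → 0 < c i + e i) (h0 : IsLocalMin (lineObjective u v lam p c e) 0) :
    ¬ IsLocalMin (lineObjective u v lam p c e) 1 := by
  have hpos : ∀ t ∈ Icc (0 : ℝ) 1, ∀ i, e i ≠ 0 → 0 < c i + t * e i := fun t ht i hi => by
    have hmin := lt_min (hc i hi) (hce i hi)
    nlinarith [mul_le_mul_of_nonneg_left (min_le_left (c i) (c i + e i)) (sub_nonneg.2 ht.2),
      mul_le_mul_of_nonneg_left (min_le_right (c i) (c i + e i)) ht.1]
  have hpos_nhds : ∀ t ∈ Icc (0 : ℝ) 1, ∀ᶠ s in 𝓝 t, ∀ i, e i ≠ 0 → 0 < c i + s * e i :=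
    fun t ht => eventually_all.2 fun i => eventually_imp_distrib_left.2 fun hi =>
      continuousAt_const.eventually_lt (by fun_prop) (hpos t ht i hi)
  have hconc := (strictConvexOn_sum_sq_mul_rpow (convex_Icc (0 : ℝ) 1) (r := p - 2)
    (show p - 2 < 0 by linarith) he hpos).strictConcaveOn_const_add_mul (2 * ‖v‖ ^ 2)
    (mul_neg_of_pos_of_neg hlam (mul_neg_of_pos_of_neg hp0 (show p - 1 < 0 by linarith)))
  exact h0.not_isLocalMin_of_strictConcaveOn_deriv2 zero_lt_one
    (fun t ht => (hpos_nhds t ht).mono fun s hs => hasDerivAt_lineObjective hs)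
    (fun t ht => hasDerivAt_lineObjectiveDeriv (hpos t ht)) hconc

end LineObjective

theorem Real.abs_sign_of_ne_zero {x : ℝ} (hx : x ≠ 0) : |Real.sign x| = 1 := by
  rcases Real.sign_apply_eq_of_ne_zero x hx with h | h <;> simp [h]

theorem abs_add_mul_eq {z d t : ℝ} (h : |t * d| < |z|) :
    |z + t * d| = |z| + t * (Real.sign z * d) := by
  have hz : z ≠ 0 := by
    rintro rfl
    rw [abs_zero] at h
    exact (abs_nonneg _).not_gt h
  rcases hz.lt_or_gt with hz | hz
  · rw [abs_of_neg hz] at h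
    rw [Real.sign_of_neg hz, abs_of_neg hz, abs_of_neg (by linarith [le_abs_self (t * d)])]
    ring
  · rw [abs_of_pos hz] at h
    rw [Real.sign_of_pos hz, abs_of_pos hz, abs_of_pos (by linarith [neg_abs_le (t * d)])]
    ring

section LpObjective

variable {H : Type*} [NormedAddCommGroup H] [InnerProductSpace ℝ H] {ι : Type*} [Fintype ι]

noncomputable def lpObjective (A : EuclideanSpace ℝ ι →L[ℝ] H) (b : H) (lam p : ℝ)
    (x : EuclideanSpace ℝ ι) : ℝ :=
  ‖A x - b‖ ^ 2 + lam * ∑ i, |x i| ^ p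

variable {A : EuclideanSpace ℝ ι →L[ℝ] H} {b : H} {lam p : ℝ}

theorem continuous_lpObjective (hp : 0 ≤ p) : Continuous (lpObjective A b lam p) := by
  unfold lpObjective
  have := Real.continuous_rpow_const hp
  fun_prop

theorem lpObjective_nonneg (hlam : 0 ≤ lam) (x : EuclideanSpace ℝ ι) :
    0 ≤ lpObjective A b lam p x := by
  unfold lpObjective
  positivity

theorem lpObjective_add_smul {z d : EuclideanSpace ℝ ι} {t : ℝ}
    (h : ∀ i, d i ≠ 0 → |t * d i| < |z i|) :
    lpObjective A b lam p (z + t • d) =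
      lineObjective (A z - b) (A d) lam p (fun i => |z i|) (fun i => Real.sign (z i) * d i) t := by
  have hA : A (z + t • d) - b = A z - b + t • A d := by rw [map_add, map_smul]; abel
  simp only [lpObjective, lineObjective, hA]
  congr 2
  refine Finset.sum_congr rfl fun i _ => ?_
  rw [PiLp.add_apply, PiLp.smul_apply, smul_eq_mul]
  by_cases hi : d i = 0
  · simp [hi]
  · rw [abs_add_mul_eq (h i hi)]

theorem isLocalMin_lineObjective {z d : EuclideanSpace ℝ ι} {t₀ : ℝ}
    (hmin : IsLocalMin (lpObjective A b lam p) (z + t₀ • d))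
    (h : ∀ i, d i ≠ 0 → |t₀ * d i| < |z i|) :
    IsLocalMin (lineObjective (A z - b) (A d) lam p (fun i => |z i|)
      (fun i => Real.sign (z i) * d i)) t₀ := by
  have hnear : ∀ᶠ t in 𝓝 t₀, ∀ i, d i ≠ 0 → |t * d i| < |z i| :=
    eventually_all.2 fun i => eventually_imp_distrib_left.2 fun hi =>
      (by fun_prop : ContinuousAt (fun t : ℝ => |t * d i|) t₀).eventually_lt continuousAt_const
        (h i hi)
  exact (hmin.comp_continuous (g := fun t : ℝ => z + t • d) (by fun_prop)).congr
    (hnear.mono fun t ht => lpObjective_add_smul ht)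

theorem mul_rpow_abs_le_of_isLocalMin_lpObjective [DecidableEq ι] (hlam : 0 ≤ lam) (hp : 0 ≤ p)
    {w : EuclideanSpace ℝ ι} (hw : IsLocalMin (lpObjective A b lam p) w) {i : ι} (hwi : w i ≠ 0) :
    lam * p * |w i| ^ (p - 1) ≤ 2 * ‖A‖ * ‖A w - b‖ := by
  set d : EuclideanSpace ℝ ι := EuclideanSpace.single i 1
  have hd : ∀ j, d j ≠ 0 → j = i := fun j hj => by
    by_contra h
    simp [d, h] at hj
  have hmin := isLocalMin_lineObjective (t₀ := 0) (d := d) (by rwa [zero_smul, add_zero])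
    fun j hj => by rw [zero_mul, abs_zero, abs_pos, hd j hj]; exact hwi
  have hcrit := hmin.hasDerivAt_eq_zero (hasDerivAt_lineObjective fun j hj => by
    rw [zero_mul, add_zero, abs_pos, hd j (right_ne_zero_of_mul hj)]
    exact hwi)
  have hsum : ∑ j, p * (Real.sign (w j) * d j) * |w j| ^ (p - 1) =
      p * Real.sign (w i) * |w i| ^ (p - 1) := by
    rw [Finset.sum_eq_single i (fun j _ hji => by simp [d, hji]) (by simp)]
    simp [d]
  simp only [lineObjectiveDeriv, zero_mul, add_zero] at hcrit
  rw [hsum] at hcrit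
  calc lam * p * |w i| ^ (p - 1) = |2 * inner ℝ (A w - b) (A d)| := by
        rw [eq_neg_of_add_eq_zero_left hcrit, abs_neg, abs_mul, abs_mul, abs_mul,
          Real.abs_sign_of_ne_zero hwi, abs_of_nonneg hlam, abs_of_nonneg hp,
          abs_of_nonneg (by positivity : 0 ≤ |w i| ^ (p - 1))]
        ring
    _ ≤ 2 * (‖A w - b‖ * ‖A d‖) := by
        rw [abs_mul, abs_two]
        gcongr
        exact abs_real_inner_le_norm _ _
    _ ≤ 2 * (‖A w - b‖ * ‖A‖) := by
        gcongr
        simpa [d] using A.le_opNorm d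
    _ = 2 * ‖A‖ * ‖A w - b‖ := by ring

theorem exists_pos_eventually_le_abs_of_isLocalMin_lpObjective [DecidableEq ι] (hp0 : 0 < p)
    (hp1 : p < 1) (hlam : 0 < lam) (z : EuclideanSpace ℝ ι) :
    ∃ ν > 0, ∀ᶠ w in 𝓝 z, IsLocalMin (lpObjective A b lam p) w → ∀ i, w i ≠ 0 → ν ≤ |w i| := by
  set M := 2 * ‖A‖ * (‖A z - b‖ + 1) + 1
  have hM : 0 < M / (lam * p) := by positivity
  refine ⟨(M / (lam * p)) ^ (p - 1)⁻¹, by positivity, ?_⟩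
  have hnear : ∀ᶠ w in 𝓝 z, ‖A w - b‖ < ‖A z - b‖ + 1 :=
    (by fun_prop : ContinuousAt (fun w => ‖A w - b‖) z).eventually_lt continuousAt_const
      (lt_add_one _)
  filter_upwards [hnear] with w hw hmin i hwi
  have hbound := mul_rpow_abs_le_of_isLocalMin_lpObjective hlam.le hp0.le hmin hwi
  rw [Real.rpow_inv_le_iff_of_neg hM (abs_pos.2 hwi) (by linarith), le_div_iff₀ (by positivity)]
  nlinarith [mul_le_mul_of_nonneg_left hw.le (by positivity : 0 ≤ 2 * ‖A‖)]

theorem eq_of_isLocalMin_lpObjective (hp0 : 0 < p) (hp1 : p < 1) (hlam : 0 < lam)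
    {y z : EuclideanSpace ℝ ι} (hz : IsLocalMin (lpObjective A b lam p) z)
    (hy : IsLocalMin (lpObjective A b lam p) y)
    (hclose : ∀ i, y i ≠ z i → 2 * |y i - z i| < |z i|) : y = z := by
  by_contra hne
  set d := y - z
  have hdz : ∀ i, d i ≠ 0 → 2 * |d i| < |z i| := fun i hi =>
    hclose i (sub_ne_zero.1 (by simpa [d] using hi))
  have hline : ∀ t : ℝ, |t| ≤ 1 → ∀ i, d i ≠ 0 → |t * d i| < |z i| := fun t ht i hi => by
    rw [abs_mul]
    nlinarith [abs_nonneg (d i), abs_nonneg t, hdz i hi]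
  have hzi : ∀ i, Real.sign (z i) * d i ≠ 0 → z i ≠ 0 := fun i hi hz =>
    hi (by rw [hz, Real.sign_zero, zero_mul])
  have h0 := isLocalMin_lineObjective (t₀ := 0) (d := d) (by simpa using hz)
    (hline 0 (by simp))
  have h1 := isLocalMin_lineObjective (t₀ := 1) (d := d) (by simpa [d] using hy)
    (hline 1 (by simp))
  refine not_isLocalMin_lineObjective_one hp0 hp1 hlam ?_ (fun i hi => abs_pos.2 (hzi i hi))
    (fun i hi => ?_) h0 h1
  · obtain ⟨i, hi⟩ : ∃ i, d i ≠ 0 := by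
      by_contra! h
      exact hne (sub_eq_zero.1 (by ext i; simpa [d] using h i))
    have hz0 : z i ≠ 0 := abs_pos.1 ((mul_pos two_pos (abs_pos.2 hi)).trans (hdz i hi))
    exact ⟨i, mul_ne_zero (by rw [Ne, Real.sign_eq_zero_iff]; exact hz0) hi⟩
  · have hdi : d i ≠ 0 := right_ne_zero_of_mul hi
    have := neg_abs_le (Real.sign (z i) * d i)
    rw [abs_mul, Real.abs_sign_of_ne_zero (hzi i hi), one_mul] at this
    linarith [hdz i hdi, abs_nonneg (d i)]

theorem eventually_isLocalMin_lpObjective_imp_eq [DecidableEq ι] (hp0 : 0 < p) (hp1 : p < 1)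
    (hlam : 0 < lam) {z : EuclideanSpace ℝ ι} (hz : IsLocalMin (lpObjective A b lam p) z) :
    ∀ᶠ w in 𝓝 z, IsLocalMin (lpObjective A b lam p) w → w = z := by
  obtain ⟨ν, hν, hνw⟩ :=
    exists_pos_eventually_le_abs_of_isLocalMin_lpObjective (A := A) (b := b) hp0 hp1 hlam z
  have hcoord : ∀ i, ∀ᶠ w : EuclideanSpace ℝ ι in 𝓝 z,
      (z i = 0 → |w i| < ν) ∧ (z i ≠ 0 → 2 * |w i - z i| < |z i|) := fun i => by
    have hcont : Continuous fun w : EuclideanSpace ℝ ι => w i := by fun_prop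
    refine (eventually_imp_distrib_left.2 fun hzi => ?_).and
      (eventually_imp_distrib_left.2 fun hzi => ?_)
    · exact (hcont.abs.continuousAt).eventually_lt continuousAt_const (by simpa [hzi])
    · exact ((hcont.sub continuous_const).abs.const_mul 2).continuousAt.eventually_lt
        continuousAt_const (by simpa using hzi)
  filter_upwards [hνw, eventually_all.2 hcoord] with w hwν hwz hw
  refine eq_of_isLocalMin_lpObjective hp0 hp1 hlam hz hw fun i hi => ?_
  by_cases hzi : z i = 0
  · rw [hzi] at hi
    exact absurd (hwν hw i hi) (not_le.2 ((hwz i).1 hzi))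
  · exact (hwz i).2 hzi

end LpObjective

theorem stmt8_general (n m : ℕ) (p lam : ℝ) (hp0 : 0 < p) (hp1 : p < 1) (hlam : 0 < lam)
    (A : EuclideanSpace ℝ (Fin n) →L[ℝ] EuclideanSpace ℝ (Fin m))
    (b : EuclideanSpace ℝ (Fin m))
    (F : EuclideanSpace ℝ (Fin n) → ℝ)
    (hF : ∀ x, F x = ‖A x - b‖ ^ 2 + lam * ∑ i, |x i| ^ p)
    (α : ℝ) (hα : 0 < α) (ε : ℕ → ℝ)
    (hsum : Summable fun k => ε k ^ 2)
    (x : ℕ → EuclideanSpace ℝ (Fin n))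
    (hH1 : ∀ k, F (x (k + 1)) - F (x k) ≤ -α * ‖x (k + 1) - x k‖ ^ 2 + ε k ^ 2)
    (xs : EuclideanSpace ℝ (Fin n))
    (hsub : ∃ φ : ℕ → ℕ, StrictMono φ ∧ Filter.Tendsto (x ∘ φ) Filter.atTop (nhds xs))
    (hmin : IsLocalMin F xs) :
    Filter.Tendsto x Filter.atTop (nhds xs) := by
  obtain rfl : F = lpObjective A b lam p := funext hF
  obtain ⟨φ, hφ, hxφ⟩ := hsub
  have hFc : Continuous (lpObjective A b lam p) := continuous_lpObjective hp0.le
  obtain ⟨⟨L, hL⟩, hstep⟩ := exists_tendsto_of_sufficient_decrease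
    (f := fun k => lpObjective A b lam p (x k)) hα
    ⟨0, by rintro _ ⟨k, rfl⟩; exact lpObjective_nonneg hlam.le _⟩ (fun k => sq_nonneg _)
    (fun k => sq_nonneg (ε k)) hsum hH1
  have hLxs : L = lpObjective A b lam p xs :=
    tendsto_nhds_unique (hL.comp hφ.tendsto_atTop) ((hFc.tendsto xs).comp hxφ)
  refine tendsto_of_mapClusterPt_of_eventually_lt hFc
    (hmin.eventually_lt_of_isolated (eventually_isLocalMin_lpObjective_imp_eq hp0 hp1 hlam hmin))
    (MapClusterPt.of_comp hφ.tendsto_atTop hxφ.mapClusterPt) ?_ (hLxs ▸ hL)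
  simpa [dist_eq_norm] using hstep.sqrt

/-- Theorem 4.2(i): if `α > 0`, `∑ ε_k² < ∞`, `{x^k}` satisfies (H1°)
`F(x^{k+1}) - F(x^k) ≤ -α ‖x^{k+1} - x^k‖² + ε_k²`, and some limiting point `x*` of `{x^k}`
(the limit of some subsequence) is a local minimum of the ℓ_p regularized least squares
objective `F`, then the whole sequence `{x^k}` converges to `x*`. -/
theorem stmt8 (n m : ℕ) (p lam : ℝ) (hp0 : 0 < p) (hp1 : p < 1) (hlam : 0 < lam)
    (A : EuclideanSpace ℝ (Fin n) →L[ℝ] EuclideanSpace ℝ (Fin m))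
    (b : EuclideanSpace ℝ (Fin m))
    (F : EuclideanSpace ℝ (Fin n) → ℝ)
    (hF : ∀ x, F x = ‖A x - b‖ ^ 2 + lam * ∑ i, |x i| ^ p)
    (α : ℝ) (hα : 0 < α) (ε : ℕ → ℝ) (hε : ∀ k, 0 ≤ ε k)
    (hsum : Summable fun k => ε k ^ 2)
    (x : ℕ → EuclideanSpace ℝ (Fin n))
    (hH1 : ∀ k, F (x (k + 1)) - F (x k) ≤ -α * ‖x (k + 1) - x k‖ ^ 2 + ε k ^ 2)
    (xs : EuclideanSpace ℝ (Fin n))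
    (hsub : ∃ φ : ℕ → ℕ, StrictMono φ ∧ Filter.Tendsto (x ∘ φ) Filter.atTop (nhds xs))
    (hmin : IsLocalMin F xs) :
    Filter.Tendsto x Filter.atTop (nhds xs) :=
  stmt8_general n m p lam hp0 hp1 hlam A b F hF α hα ε hsum x hH1 xs hsub hmin
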